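/- Let X = ξ Σ^{1/2} S be a centered elliptical random vector in ℝ^p (ξ ≥ 0 with E ξ² ∈ (0,∞) and absolutely continuous law, S uniform on the unit sphere independent of ξ, Σ symmetric positive definite), let q ∈ (0,1), and let r satisfy P(Xᵀ Σ⁻¹ X > r) = q. Define Γ_LSS = E[1_{XᵀΣ⁻¹X > r} X Xᵀ] and Γ_Ber = q · E[X Xᵀ]. Then Γ_LSS − Γ_Ber is positive semidefinite and det(Γ_LSS) ≥ det(Γ_Ber). -/

import Mathlib

open MeasureTheory ProbabilityTheory Matrix

/-!
Since `‖S‖ = 1` and `Σ = R Rᵀ`, the leverage score `Xᵀ Σ⁻¹ X` equals `ξ²`, so the LSS event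
`{ξ² > r}` depends on `ξ` alone. Independence of `ξ` and `S` then makes both matrices scalar
multiples of `M = E[(RS)(RS)ᵀ] ⪰ 0`, namely `Γ_LSS = E[ξ²; ξ² > r] M` and `Γ_Ber = q E[ξ²] M`,
and everything reduces to `q E[ξ²] ≤ E[ξ²; ξ² > r]`. This holds because `ξ² > r` on an event of
probability `q` and `ξ² ≤ r` off it: `q E[ξ²; ξ² ≤ r] ≤ q (1 - q) r ≤ (1 - q) E[ξ²; ξ² > r]`.
-/

namespace Matrix

variable {n : Type*}

theorem mulVec_dotProduct_inv_mul_transpose_mulVec [Fintype n] [DecidableEq n] {α : Type*}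
    [CommRing α] {R : Matrix n n α} (hR : IsUnit R.det) (v : n → α) :
    R *ᵥ v ⬝ᵥ (R * Rᵀ)⁻¹ *ᵥ (R *ᵥ v) = v ⬝ᵥ v := by
  have hRt : IsUnit Rᵀ.det := by rwa [det_transpose]
  rw [mulVec_mulVec, ← vecMul_transpose, ← dotProduct_mulVec, mulVec_mulVec, mul_inv_rev,
    ← Matrix.mul_assoc, ← Matrix.mul_assoc, mul_nonsing_inv _ hRt, Matrix.one_mul,
    nonsing_inv_mul _ hR, one_mulVec]

theorem PosSemidef.smul_sub_smul {M : Matrix n n ℝ} (hM : M.PosSemidef) {c d : ℝ} (hdc : d ≤ c) :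
    (c • M - d • M).PosSemidef := by
  rw [← sub_smul]
  exact hM.smul (sub_nonneg.2 hdc)

theorem PosSemidef.det_smul_le_det_smul [Fintype n] [DecidableEq n] {M : Matrix n n ℝ}
    (hM : M.PosSemidef) {c d : ℝ} (hd : 0 ≤ d) (hdc : d ≤ c) : (d • M).det ≤ (c • M).det := by
  rw [det_smul, det_smul]
  exact mul_le_mul_of_nonneg_right (pow_le_pow_left₀ hd hdc _) hM.det_nonneg

end Matrix

theorem EuclideanSpace.ofLp_dotProduct_ofLp_self {ι : Type*} [Fintype ι]
    (x : EuclideanSpace ℝ ι) : x.ofLp ⬝ᵥ x.ofLp = ‖x‖ ^ 2 :=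
  real_inner_self_eq_norm_sq x

section Moments

variable {Ω : Type*} [MeasurableSpace Ω] {μ : Measure Ω}

theorem measureReal_mul_integral_le_setIntegral_superlevel [IsProbabilityMeasure μ] {Y : Ω → ℝ}
    (hYm : Measurable Y) (hY : Integrable Y μ) (r : ℝ) :
    μ.real {ω | r < Y ω} * ∫ ω, Y ω ∂μ ≤ ∫ ω in {ω | r < Y ω}, Y ω ∂μ := by
  set A := {ω | r < Y ω}
  have hA : MeasurableSet A := measurableSet_lt measurable_const hYm
  set a := μ.real A
  have hAc : μ.real Aᶜ = 1 - a := probReal_compl_eq_one_sub hA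
  have hlow : r * a ≤ ∫ ω in A, Y ω ∂μ := by
    simpa using setIntegral_ge_of_const_le_real hA (measure_ne_top μ A)
      (fun ω (hω : r < Y ω) => hω.le) hY.integrableOn
  have hup : ∫ ω in Aᶜ, Y ω ∂μ ≤ r * (1 - a) := by
    calc ∫ ω in Aᶜ, Y ω ∂μ ≤ ∫ _ in Aᶜ, r ∂μ :=
          setIntegral_mono_on hY.integrableOn (integrable_const r).integrableOn hA.compl
            fun ω (hω : ¬ r < Y ω) => not_lt.1 hω
      _ = r * (1 - a) := by rw [setIntegral_const, hAc, smul_eq_mul, mul_comm]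
  have ha0 : 0 ≤ a := measureReal_nonneg
  have ha1 : a ≤ 1 := measureReal_le_one
  rw [← integral_add_compl hA hY]
  nlinarith [mul_le_mul_of_nonneg_left hup ha0, mul_le_mul_of_nonneg_left hlow (sub_nonneg.2 ha1)]

theorem MeasureTheory.Integrable.comp_of_forall_mem_isCompact [IsFiniteMeasure μ] {E : Type*}
    [TopologicalSpace E] [MeasurableSpace E] [OpensMeasurableSpace E] {K : Set E}
    (hK : IsCompact K) {g : E → ℝ} (hg : Continuous g) {S : Ω → E} (hS : Measurable S)
    (hSK : ∀ ω, S ω ∈ K) : Integrable (g ∘ S) μ := by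
  obtain ⟨C, hC⟩ := hK.exists_bound_of_continuousOn hg.continuousOn
  exact Integrable.of_bound (hg.measurable.comp hS).aestronglyMeasurable C
    (Filter.Eventually.of_forall fun ω => hC _ (hSK ω))

variable {n : Type*}

noncomputable def secondMomentMatrix (μ : Measure Ω) (V : Ω → n → ℝ) : Matrix n n ℝ :=
  Matrix.of fun i j => ∫ ω, V ω i * V ω j ∂μ

theorem posSemidef_secondMomentMatrix [Fintype n] {V : Ω → n → ℝ}
    (hV : ∀ i j, Integrable (fun ω => V ω i * V ω j) μ) :
    (secondMomentMatrix μ V).PosSemidef := by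
  refine PosSemidef.of_dotProduct_mulVec_nonneg ?_ fun x => ?_
  · ext i j
    simp only [secondMomentMatrix, conjTranspose_apply, of_apply, star_trivial, mul_comm]
  · have hint : ∀ i j, Integrable (fun ω => x i * (V ω i * V ω j) * x j) μ :=
      fun i j => ((hV i j).const_mul _).mul_const _
    have hquad : star x ⬝ᵥ secondMomentMatrix μ V *ᵥ x = ∫ ω, (x ⬝ᵥ V ω) ^ 2 ∂μ :=
      calc star x ⬝ᵥ secondMomentMatrix μ V *ᵥ x
          = ∑ i, ∑ j, ∫ ω, x i * (V ω i * V ω j) * x j ∂μ := by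
            simp only [star_trivial, dotProduct, mulVec, secondMomentMatrix, of_apply,
              Finset.mul_sum]
            refine Finset.sum_congr rfl fun i _ => Finset.sum_congr rfl fun j _ => ?_
            rw [integral_mul_const, integral_const_mul, mul_assoc]
        _ = ∫ ω, ∑ i, ∑ j, x i * (V ω i * V ω j) * x j ∂μ := by
            rw [integral_finsetSum _ fun i _ => integrable_finsetSum _ fun j _ => hint i j]
            exact Finset.sum_congr rfl fun i _ => (integral_finsetSum _ fun j _ => hint i j).symm
        _ = ∫ ω, (x ⬝ᵥ V ω) ^ 2 ∂μ := by
            congr 1 with ω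
            rw [dotProduct, sq, Finset.sum_mul_sum]
            exact Finset.sum_congr rfl fun i _ => Finset.sum_congr rfl fun j _ => by ring
    rw [hquad]
    exact integral_nonneg fun ω => sq_nonneg _

theorem ProbabilityTheory.IndepFun.secondMomentMatrix_restrict_preimage_smul {ξ : Ω → ℝ}
    {V : Ω → n → ℝ} (hξV : IndepFun ξ V μ) (hξ : Measurable ξ) (hV : AEMeasurable V μ)
    {B : Set ℝ} (hB : MeasurableSet B) :
    secondMomentMatrix (μ.restrict (ξ ⁻¹' B)) (fun ω => ξ ω • V ω) =
      (∫ ω in ξ ⁻¹' B, ξ ω ^ 2 ∂μ) • secondMomentMatrix μ V := by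
  ext i j
  set f := B.indicator fun t : ℝ => t ^ 2
  have hf : Measurable f := (measurable_id.pow_const 2).indicator hB
  have hg : Measurable fun v : n → ℝ => v i * v j := by fun_prop
  have hfξ : ∀ ω, f (ξ ω) = (ξ ⁻¹' B).indicator (fun ω => ξ ω ^ 2) ω := fun ω =>
    (Set.indicator_comp_right ξ).symm
  calc ∫ ω in ξ ⁻¹' B, (ξ ω • V ω) i * (ξ ω • V ω) j ∂μ
      = ∫ ω, f (ξ ω) * (V ω i * V ω j) ∂μ := by
        rw [← integral_indicator (hξ hB)]
        congr 1 with ω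
        rw [hfξ, ← Set.indicator_mul_left _ _ fun ω => V ω i * V ω j]
        simp only [Pi.smul_apply, smul_eq_mul]
        ring_nf
    _ = (∫ ω, f (ξ ω) ∂μ) * ∫ ω, V ω i * V ω j ∂μ :=
        (hξV.comp hf hg).integral_mul_eq_mul_integral (hf.comp hξ).aestronglyMeasurable
          (hg.comp_aemeasurable hV).aestronglyMeasurable
    _ = (∫ ω in ξ ⁻¹' B, ξ ω ^ 2 ∂μ) * ∫ ω, V ω i * V ω j ∂μ := by
        simp only [hfξ, integral_indicator (hξ hB)]

theorem ProbabilityTheory.IndepFun.smul_secondMomentMatrix_le_restrict_superlevel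
    [IsProbabilityMeasure μ] [Fintype n] [DecidableEq n] {ξ : Ω → ℝ} {V : Ω → n → ℝ}
    (hξV : IndepFun ξ V μ) (hξ : Measurable ξ) (hξ2 : Integrable (fun ω => ξ ω ^ 2) μ)
    (hV : Measurable V) (hVV : ∀ i j, Integrable (fun ω => V ω i * V ω j) μ) (r : ℝ) :
    (secondMomentMatrix (μ.restrict {ω | r < ξ ω ^ 2}) (fun ω => ξ ω • V ω) -
        μ.real {ω | r < ξ ω ^ 2} • secondMomentMatrix μ (fun ω => ξ ω • V ω)).PosSemidef ∧
      (μ.real {ω | r < ξ ω ^ 2} • secondMomentMatrix μ (fun ω => ξ ω • V ω)).det ≤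
        (secondMomentMatrix (μ.restrict {ω | r < ξ ω ^ 2}) (fun ω => ξ ω • V ω)).det := by
  have hB : MeasurableSet {t : ℝ | r < t ^ 2} :=
    measurableSet_lt measurable_const (measurable_id.pow_const 2)
  have hsuper := hξV.secondMomentMatrix_restrict_preimage_smul hξ hV.aemeasurable hB
  have hall := hξV.secondMomentMatrix_restrict_preimage_smul hξ hV.aemeasurable MeasurableSet.univ
  simp only [Set.preimage_univ, Measure.restrict_univ] at hall
  have hle := measureReal_mul_integral_le_setIntegral_superlevel (hξ.pow_const 2) hξ2 r
  have hM := posSemidef_secondMomentMatrix hVV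
  have hd : 0 ≤ μ.real {ω | r < ξ ω ^ 2} * ∫ ω, ξ ω ^ 2 ∂μ :=
    mul_nonneg measureReal_nonneg (integral_nonneg fun ω => sq_nonneg _)
  rw [Set.preimage_ofPred_eq] at hsuper
  rw [hsuper, hall, smul_smul]
  exact ⟨hM.smul_sub_smul hle, hM.det_smul_le_det_smul hd hle⟩

end Moments

theorem lss_dominates_bernoulli_general {p : ℕ}
    {Ω : Type*} [MeasurableSpace Ω] (μ : Measure Ω) [IsProbabilityMeasure μ]
    (ξ : Ω → ℝ) (hξmeas : Measurable ξ)
    (hξint : Integrable (fun ω => ξ ω ^ 2) μ)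
    (S : Ω → EuclideanSpace ℝ (Fin p)) (hSmeas : Measurable S)
    (hSsphere : ∀ ω, ‖S ω‖ = 1)
    (hindep : IndepFun ξ S μ)
    (Sig R : Matrix (Fin p) (Fin p) ℝ) (hSig : Sig.PosDef)
    (hRsym : R.IsSymm) (hRR : R * R = Sig)
    (X : Ω → Fin p → ℝ) (hX : X = fun ω => ξ ω • R.mulVec (fun i => S ω i))
    (q : ℝ) (hq : q ∈ Set.Ioo (0 : ℝ) 1) (r : ℝ)
    (hrq : μ {ω | r < X ω ⬝ᵥ Sig⁻¹.mulVec (X ω)} = ENNReal.ofReal q)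
    (ΓLSS ΓBer : Matrix (Fin p) (Fin p) ℝ)
    (hΓLSS : ΓLSS = Matrix.of fun i j =>
      ∫ ω, (if r < X ω ⬝ᵥ Sig⁻¹.mulVec (X ω) then X ω i * X ω j else 0) ∂μ)
    (hΓBer : ΓBer = q • Matrix.of fun i j => ∫ ω, X ω i * X ω j ∂μ) :
    (ΓLSS - ΓBer).PosSemidef ∧ ΓBer.det ≤ ΓLSS.det := by
  have hRunit : IsUnit R.det :=
    (isUnit_iff_isUnit_det R).1 (isUnit_of_mul_isUnit_left (hRR ▸ hSig.isUnit))
  have hSigR : Sig = R * Rᵀ := by rw [hRsym.eq, hRR]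
  have hquad : ∀ ω, X ω ⬝ᵥ Sig⁻¹ *ᵥ X ω = ξ ω ^ 2 := fun ω => by
    simp only [hX, hSigR, mulVec_smul, smul_dotProduct, dotProduct_smul, smul_eq_mul,
      mulVec_dotProduct_inv_mul_transpose_mulVec hRunit, EuclideanSpace.ofLp_dotProduct_ofLp_self,
      hSsphere ω]
    ring
  have hA : μ.real {ω | r < ξ ω ^ 2} = q := by
    rw [measureReal_def, ← ENNReal.toReal_ofReal hq.1.le, ← hrq]
    simp only [hquad]
  have hLSS : ΓLSS = secondMomentMatrix (μ.restrict {ω | r < ξ ω ^ 2}) X := by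
    rw [hΓLSS]
    ext i j
    simp only [of_apply, secondMomentMatrix, hquad]
    rw [← integral_indicator (measurableSet_lt measurable_const (hξmeas.pow_const 2))]
    congr 1 with ω
  have hBer : ΓBer = μ.real {ω | r < ξ ω ^ 2} • secondMomentMatrix μ X := by
    rw [hΓBer, hA]
    rfl
  have hVcont : Continuous fun s : EuclideanSpace ℝ (Fin p) => R *ᵥ s.ofLp := by fun_prop
  have hVint : ∀ i j, Integrable (fun ω => (R *ᵥ (S ω).ofLp) i * (R *ᵥ (S ω).ofLp) j) μ :=
    fun i j => Integrable.comp_of_forall_mem_isCompact (isCompact_sphere 0 1)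
      (g := fun s : EuclideanSpace ℝ (Fin p) => (R *ᵥ s.ofLp) i * (R *ᵥ s.ofLp) j) (by fun_prop)
      hSmeas fun ω => mem_sphere_zero_iff_norm.2 (hSsphere ω)
  have hindepV : IndepFun ξ (fun ω => R *ᵥ (S ω).ofLp) μ :=
    hindep.comp measurable_id hVcont.measurable
  rw [hLSS, hBer, hX]
  exact hindepV.smul_secondMomentMatrix_le_restrict_superlevel hξmeas hξint
    (hVcont.measurable.comp hSmeas) hVint r

/-- Comparison of the leverage score sampler and the Bernoulli sampler at the same
sampling rate `q` for a centered elliptical covariate `X = ξ Σ^{1/2} S`: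
`Γ_LSS − Γ_Ber` is positive semidefinite and `det Γ_LSS ≥ det Γ_Ber`, where
`Γ_LSS = E[1_{XᵀΣ⁻¹X > r} X Xᵀ]` and `Γ_Ber = q E[X Xᵀ]`. -/
theorem lss_dominates_bernoulli {p : ℕ} (hp : 0 < p)
    {Ω : Type*} [MeasurableSpace Ω] (μ : Measure Ω) [IsProbabilityMeasure μ]
    (ξ : Ω → ℝ) (hξmeas : Measurable ξ) (hξ0 : ∀ ω, 0 ≤ ξ ω)
    (hξint : Integrable (fun ω => ξ ω ^ 2) μ)
    (hξpos : 0 < ∫ ω, ξ ω ^ 2 ∂μ)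
    (hξac : (μ.map ξ) ≪ (volume : Measure ℝ))
    (S : Ω → EuclideanSpace ℝ (Fin p)) (hSmeas : Measurable S)
    (hSsphere : ∀ ω, ‖S ω‖ = 1)
    (hSunif : ∀ g : EuclideanSpace ℝ (Fin p) ≃ₗᵢ[ℝ] EuclideanSpace ℝ (Fin p),
      (μ.map S).map g = μ.map S)
    (hindep : IndepFun ξ S μ)
    (Sig R : Matrix (Fin p) (Fin p) ℝ) (hSig : Sig.PosDef)
    (hRsym : R.IsSymm) (hRR : R * R = Sig)
    (X : Ω → Fin p → ℝ) (hX : X = fun ω => ξ ω • R.mulVec (fun i => S ω i))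
    (q : ℝ) (hq : q ∈ Set.Ioo (0 : ℝ) 1) (r : ℝ)
    (hrq : μ {ω | r < X ω ⬝ᵥ Sig⁻¹.mulVec (X ω)} = ENNReal.ofReal q)
    (ΓLSS ΓBer : Matrix (Fin p) (Fin p) ℝ)
    (hΓLSS : ΓLSS = Matrix.of fun i j =>
      ∫ ω, (if r < X ω ⬝ᵥ Sig⁻¹.mulVec (X ω) then X ω i * X ω j else 0) ∂μ)
    (hΓBer : ΓBer = q • Matrix.of fun i j => ∫ ω, X ω i * X ω j ∂μ) :
    (ΓLSS - ΓBer).PosSemidef ∧ ΓBer.det ≤ ΓLSS.det :=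
  lss_dominates_bernoulli_general μ ξ hξmeas hξint S hSmeas hSsphere hindep Sig R hSig hRsym hRR X
    hX q hq r hrq ΓLSS ΓBer hΓLSS hΓBer
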